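/- arXiv:1506.06521 — 3 statements merged into one kernel-verified Lean document; each statement's English description precedes it below -/
import Mathlib

section
/- Let G be a group, X a right G-set, E a Banach left G-module, and suppose there exists a right invariant mean m on B(X) extended to E*-valued functions (a norm-one linear operator m : B(X; E*) → E* fixing constants, invariant under right translations, and equivariant for the dual right G-action on E*). Let f : X → E* and h : G → E* satisfy ‖f(x·y) − f(x)·y − h(y)‖ ≤ δ for all x ∈ X, y ∈ G. Then H : G → E* defined by H(y) = m(x ↦ f(x·y) − f(x)·y) satisfies the cocycle identity H(yz) = H(y)·z + H(z) for all y, z ∈ G. -/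
/- The identity already holds pointwise before averaging:
f(x·yz) − f(x)·yz = (f(x·y) − f(x)·y)·z + (f((x·y)·z) − f(x·y)·z).
Equivariance of the mean moves `·z` out of the first term, and right invariance
turns the mean of the second term, a translate by `y`, into `H(z)`. -/

theorem ContinuousLinearMap.translate_sub_comp_mul {𝕜 X G E F : Type*} [Mul G]
    [NontriviallyNormedField 𝕜] [NormedAddCommGroup E] [NormedSpace 𝕜 E]
    [NormedAddCommGroup F] [NormedSpace 𝕜 F]
    (act : X → G → X) (hact_mul : ∀ x y z, act x (y * z) = act (act x y) z)
    (ρ : G → E →L[𝕜] E) (hρ_mul : ∀ (y y' : G) (ξ : E), ρ y (ρ y' ξ) = ρ (y * y') ξ)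
    (f : X → E →L[𝕜] F) (y z : G) :
    (fun x => f (act x (y * z)) - (f x).comp (ρ (y * z)))
      = (fun x => (f (act x y) - (f x).comp (ρ y)).comp (ρ z))
        + fun x => f (act (act x y) z) - (f (act x y)).comp (ρ z) := by
  funext x
  have hρ_comp : ((f x).comp (ρ y)).comp (ρ z) = (f x).comp (ρ (y * z)) := by
    ext ξ
    simp only [ContinuousLinearMap.comp_apply, hρ_mul]
  simp only [Pi.add_apply, ContinuousLinearMap.sub_comp, hρ_comp, hact_mul]
  abel

theorem stmt_3_general {G X E : Type*} [Group G]
    [NormedAddCommGroup E] [NormedSpace ℝ E]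
    (act : X → G → X)
    (hact_mul : ∀ x y z, act x (y * z) = act (act x y) z)
    (ρ : G → E →L[ℝ] E)
    (hρ_mul : ∀ (y y' : G) (ξ : E), ρ y (ρ y' ξ) = ρ (y * y') ξ)
    (M : (X → StrongDual ℝ E) →ₗ[ℝ] StrongDual ℝ E)
    (hM_inv : ∀ (f : X → StrongDual ℝ E) (y : G), M (fun x => f (act x y)) = M f)
    (hM_equiv : ∀ (f : X → StrongDual ℝ E) (y : G),
      M (fun x => (f x).comp (ρ y)) = (M f).comp (ρ y))
    (f : X → StrongDual ℝ E) :
    ∀ y z : G,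
      M (fun x => f (act x (y * z)) - (f x).comp (ρ (y * z)))
        = (M (fun x => f (act x y) - (f x).comp (ρ y))).comp (ρ z)
          + M (fun x => f (act x z) - (f x).comp (ρ z)) := by
  intro y z
  rw [ContinuousLinearMap.translate_sub_comp_mul act hact_mul ρ hρ_mul f y z, map_add,
    hM_equiv, hM_inv (fun x => f (act x z) - (f x).comp (ρ z)) y]

/-- The approximate solution `f` of the generalized additive equation gives rise, via an
invariant equivariant mean `M` on `B(X; E*)`, to a map `H (y) = M (x ↦ f(x·y) − f(x)·y)`
satisfying the cocycle identity `H(yz) = H(y)·z + H(z)`. -/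
theorem stmt_3 {G X E : Type*} [Group G]
    [NormedAddCommGroup E] [NormedSpace ℝ E] [CompleteSpace E]
    (act : X → G → X)
    (hact_one : ∀ x, act x 1 = x)
    (hact_mul : ∀ x y z, act x (y * z) = act (act x y) z)
    (ρ : G → E →L[ℝ] E)
    (hρ_one : ρ 1 = ContinuousLinearMap.id ℝ E)
    (hρ_mul : ∀ (y y' : G) (ξ : E), ρ y (ρ y' ξ) = ρ (y * y') ξ)
    (hρ_iso : ∀ (y : G) (ξ : E), ‖ρ y ξ‖ = ‖ξ‖)
    (M : (X → StrongDual ℝ E) →ₗ[ℝ] StrongDual ℝ E)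
    (hM_norm : ∀ (f : X → StrongDual ℝ E) (C : ℝ), (∀ x, ‖f x‖ ≤ C) → ‖M f‖ ≤ C)
    (hM_const : ∀ c : StrongDual ℝ E, M (fun _ => c) = c)
    (hM_inv : ∀ (f : X → StrongDual ℝ E) (y : G), M (fun x => f (act x y)) = M f)
    (hM_equiv : ∀ (f : X → StrongDual ℝ E) (y : G),
      M (fun x => (f x).comp (ρ y)) = (M f).comp (ρ y))
    (δ : ℝ) (hδ : 0 < δ)
    (f : X → StrongDual ℝ E) (h : G → StrongDual ℝ E)
    (hfh : ∀ (x : X) (y : G), ‖f (act x y) - (f x).comp (ρ y) - h y‖ ≤ δ) :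
    ∀ y z : G,
      M (fun x => f (act x (y * z)) - (f x).comp (ρ (y * z)))
        = (M (fun x => f (act x y) - (f x).comp (ρ y))).comp (ρ z)
          + M (fun x => f (act x z) - (f x).comp (ρ z)) :=
  stmt_3_general act hact_mul ρ hρ_mul M hM_inv hM_equiv f
end

section
/- Let G be a topological group, E a Banach space, H : G → E an additive map (H(yz) = H(y) + H(z) for all y, z ∈ G), and h : G → E a continuous map such that ‖H(y) − h(y)‖ ≤ δ for all y ∈ G and some constant δ > 0. Then H is continuous. -/
/-! Near the identity, `H` is within `δ` of the continuous `h`, hence bounded by some `C`.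
Since `y ↦ yᵏ` is continuous, `yᵏ` stays in that neighbourhood for `y` close to `1`, so
`k ‖H y‖ = ‖H (yᵏ)‖ ≤ C`; letting `k` grow gives `H y → 0` as `y → 1`, and additivity
transports continuity at `1` to every point. -/

open Filter Topology

section MapMul

variable {G E : Type*} [Group G] [AddGroup E] {H : G → E}

theorem map_one_eq_zero_of_map_mul (hH : ∀ y z, H (y * z) = H y + H z) : H 1 = 0 :=
  left_eq_add.mp (by simpa only [mul_one] using hH 1 1)

theorem map_pow_eq_nsmul_of_map_mul (hH : ∀ y z, H (y * z) = H y + H z) (y : G) (k : ℕ) :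
    H (y ^ k) = k • H y := by
  induction k with
  | zero => simp [map_one_eq_zero_of_map_mul hH]
  | succ k ih => rw [pow_succ, hH, ih, succ_nsmul]

theorem continuous_of_tendsto_one_of_map_mul [TopologicalSpace G] [ContinuousMul G]
    [TopologicalSpace E] [ContinuousAdd E] (hH : ∀ y z, H (y * z) = H y + H z)
    (hH₁ : Tendsto H (𝓝 1) (𝓝 0)) : Continuous H := by
  refine continuous_iff_continuousAt.mpr fun x => ?_
  have hleft : Tendsto (x⁻¹ * ·) (𝓝 x) (𝓝 1) :=
    (continuous_const_mul x⁻¹).tendsto' x 1 (inv_mul_cancel x)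
  have hsum : Tendsto (fun z => H x + H (x⁻¹ * z)) (𝓝 x) (𝓝 (H x + 0)) :=
    tendsto_const_nhds.add (hH₁.comp hleft)
  rw [add_zero] at hsum
  exact hsum.congr fun z => by rw [← hH, mul_inv_cancel_left]

end MapMul

theorem eventually_norm_le_of_norm_sub_le {X E : Type*} [TopologicalSpace X]
    [SeminormedAddCommGroup E] {H h : X → E} {x : X} (hh : ContinuousAt h x) {δ : ℝ}
    (hHh : ∀ y, ‖H y - h y‖ ≤ δ) : ∀ᶠ y in 𝓝 x, ‖H y‖ ≤ δ + ‖h x‖ + 1 := by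
  filter_upwards [hh.eventually (Metric.ball_mem_nhds (h x) one_pos)] with y hy
  rw [dist_eq_norm] at hy
  calc ‖H y‖ = ‖(H y - h y) + (h y - h x) + h x‖ := by rw [sub_add_sub_cancel, sub_add_cancel]
    _ ≤ ‖H y - h y‖ + ‖h y - h x‖ + ‖h x‖ := norm_add₃_le
    _ ≤ δ + ‖h x‖ + 1 := by linarith [hHh y]

theorem tendsto_nhds_zero_of_eventually_norm_le_of_map_mul {G E : Type*} [Group G]
    [TopologicalSpace G] [ContinuousMul G] [NormedAddCommGroup E] [NormedSpace ℝ E]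
    {H : G → E} (hH : ∀ y z, H (y * z) = H y + H z) {C : ℝ}
    (hC : ∀ᶠ y in 𝓝 1, ‖H y‖ ≤ C) : Tendsto H (𝓝 1) (𝓝 0) := by
  refine NormedAddGroup.tendsto_nhds_zero.mpr fun ε hε => ?_
  obtain ⟨k, hk⟩ := exists_nat_gt (C / ε)
  have hCk : C < (k + 1 : ℕ) * ε := by
    rw [div_lt_iff₀ hε] at hk
    push_cast
    linarith
  have hpow : Tendsto (· ^ (k + 1)) (𝓝 (1 : G)) (𝓝 1) :=
    (continuous_pow (k + 1)).tendsto' 1 1 (one_pow _)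
  filter_upwards [hpow.eventually hC] with y hy
  rw [map_pow_eq_nsmul_of_map_mul hH, RCLike.norm_nsmul ℝ, nsmul_eq_mul] at hy
  exact lt_of_mul_lt_mul_left (hy.trans_lt hCk) (Nat.cast_nonneg _)

theorem stmt_8_general {G E : Type*} [Group G] [TopologicalSpace G] [IsTopologicalGroup G]
    [NormedAddCommGroup E] [NormedSpace ℝ E]
    (H h : G → E)
    (hH_add : ∀ y z : G, H (y * z) = H y + H z)
    (hh_cont : Continuous h)
    (δ : ℝ)
    (hHh : ∀ y : G, ‖H y - h y‖ ≤ δ) :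
    Continuous H :=
  continuous_of_tendsto_one_of_map_mul hH_add <|
    tendsto_nhds_zero_of_eventually_norm_le_of_map_mul hH_add <|
      eventually_norm_le_of_norm_sub_le hh_cont.continuousAt hHh

/-- Lemma 4.1: an additive map `H` at bounded distance from a continuous map `h`
on a topological group is continuous. -/
theorem stmt_8 {G E : Type*} [Group G] [TopologicalSpace G] [IsTopologicalGroup G]
    [NormedAddCommGroup E] [NormedSpace ℝ E] [CompleteSpace E]
    (H h : G → E)
    (hH_add : ∀ y z : G, H (y * z) = H y + H z)
    (hh_cont : Continuous h)
    (δ : ℝ) (hδ : 0 < δ)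
    (hHh : ∀ y : G, ‖H y - h y‖ ≤ δ) :
    Continuous H :=
  stmt_8_general H h hH_add hh_cont δ hHh
end

section
/- Let G be a strongly amenable topological group, L a closed subgroup such that the canonical projection π : G → G/L is a fiber bundle, X = G/L the right G-space of right cosets, and E a Banach space. Suppose h : G → E* and f : X → E* are continuous and satisfy ‖f(x·y) − f(x) − h(y)‖ ≤ δ for all x ∈ X, y ∈ G. Then there exist continuous maps H : G → E* and F : X → E* with H(yz) = H(y) + H(z), F(x·y) = F(x) + H(y), ‖H(y) − h(y)‖ ≤ δ, and ‖F(x) − f(x)‖ ≤ 2δ. -/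
/-!
Average with a right invariant mean `μ` on `CB(G)`, weak-* in each `e ∈ E`:
`H z = μ_y [f (y z) - f y]` and `F x = μ_y [f (x y⁻¹) + h y]`. Right invariance of `μ` makes `H`
additive and gives `F (x z) = F x + H z`; the estimates pass through the average because `μ` has
norm one and fixes constants. `H` is additive and within `δ` of the continuous `h`, hence bounded
near `1`, and an additive map bounded near `1` is continuous as `H (y ^ n) = n • H y`.
Finally `F ∘ π = F (π 1) + H` is continuous, hence so is `F`.
-/

open Filter Topology BoundedContinuousFunction

theorem continuous_of_map_mul_of_norm_le_nhds_one {G V : Type*} [Group G] [TopologicalSpace G]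
    [IsTopologicalGroup G] [NormedAddCommGroup V] [NormedSpace ℝ V] {H : G → V}
    (hH : ∀ y z, H (y * z) = H y + H z) {U : Set G} (hU : U ∈ 𝓝 1) {C : ℝ}
    (hC : ∀ y ∈ U, ‖H y‖ ≤ C) : Continuous H := by
  let φ : G →* Multiplicative V := MonoidHom.mk' (fun g => Multiplicative.ofAdd (H g)) hH
  have hpow : ∀ (n : ℕ) (y : G), H (y ^ n) = n • H y := fun n y =>
    congrArg Multiplicative.toAdd (map_pow φ y n)
  suffices Tendsto H (𝓝 1) (𝓝 0) by
    refine continuous_toAdd.comp (continuous_of_continuousAt_one φ ?_)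
    rw [ContinuousAt, map_one]
    exact (continuous_ofAdd.tendsto 0).comp this
  rw [Metric.tendsto_nhds]
  intro ε hε
  have hC₀ : 0 ≤ C := (norm_nonneg _).trans (hC 1 (mem_of_mem_nhds hU))
  obtain ⟨n, hn⟩ := exists_nat_gt (C / ε)
  rw [div_lt_iff₀ hε] at hn
  filter_upwards [(continuous_pow n).tendsto' 1 1 (one_pow n) hU] with y hy
  have hny : n * ‖H y‖ ≤ C := by
    simpa [hpow, ← Nat.cast_smul_eq_nsmul ℝ, norm_smul] using hC _ hy
  rw [dist_zero_right]
  nlinarith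

theorem continuous_of_map_mul_of_norm_sub_le {G V : Type*} [Group G] [TopologicalSpace G]
    [IsTopologicalGroup G] [NormedAddCommGroup V] [NormedSpace ℝ V] {H h : G → V}
    (hH : ∀ y z, H (y * z) = H y + H z) (hh : ContinuousAt h 1) {δ : ℝ}
    (hHh : ∀ y, ‖H y - h y‖ ≤ δ) : Continuous H :=
  continuous_of_map_mul_of_norm_le_nhds_one hH (C := δ + (‖h 1‖ + 1))
    (hh.norm.eventually_lt_const (lt_add_one ‖h 1‖)) fun y (hy : ‖h y‖ < ‖h 1‖ + 1) => by
      linarith [norm_le_norm_add_norm_sub' (H y) (h y), hHh y]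

namespace BoundedContinuousFunction

variable {α β : Type*} [TopologicalSpace α] [SeminormedAddCommGroup β]

def ofNormSubLe (f : α → β) (hf : Continuous f) (b : β) (C : ℝ) (hC : ∀ x, ‖f x - b‖ ≤ C) :
    α →ᵇ β :=
  ofNormedAddCommGroup f hf (‖b‖ + C) fun x => by
    linarith [norm_le_norm_add_norm_sub' (f x) b, hC x]

theorem norm_compLeftContinuousBounded_apply_le {E : Type*} [NormedAddCommGroup E]
    [NormedSpace ℝ E] (A : α →ᵇ StrongDual ℝ E) (e : E) :
    ‖(ContinuousLinearMap.apply ℝ ℝ e).compLeftContinuousBounded α A‖ ≤ ‖A‖ * ‖e‖ :=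
  (norm_le (by positivity)).2 fun y => (A y).le_of_opNorm_le (A.norm_coe_le_norm y) e

end BoundedContinuousFunction

structure RightInvariantMean (G : Type*) [Mul G] [TopologicalSpace G] [ContinuousMul G] where
  toLinearMap : (G →ᵇ ℝ) →ₗ[ℝ] ℝ
  apply_one : toLinearMap 1 = 1
  abs_le_norm : ∀ g, |toLinearMap g| ≤ ‖g‖
  map_compContinuous_mulRight :
    ∀ g (z : G), toLinearMap (g.compContinuous (ContinuousMap.mulRight z)) = toLinearMap g

namespace RightInvariantMean

variable {G E : Type*} [Mul G] [TopologicalSpace G] [ContinuousMul G]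
  [NormedAddCommGroup E] [NormedSpace ℝ E] (μ : RightInvariantMean G)

noncomputable def ofLinearMap (m : (G → ℝ) →ₗ[ℝ] ℝ) (hm1 : m 1 = 1)
    (hmb : ∀ (g : G → ℝ) (C : ℝ), Continuous g → (∀ y, |g y| ≤ C) → |m g| ≤ C)
    (hminv : ∀ (g : G → ℝ), Continuous g → (∃ C, ∀ y, |g y| ≤ C) →
        ∀ z : G, m (fun y => g (y * z)) = m g) : RightInvariantMean G where
  toLinearMap := m ∘ₗ { toFun := (⇑), map_add' := fun _ _ => rfl, map_smul' := fun _ _ => rfl }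
  apply_one := hm1
  abs_le_norm g := hmb g ‖g‖ g.continuous g.norm_coe_le_norm
  map_compContinuous_mulRight g z := hminv g g.continuous ⟨‖g‖, g.norm_coe_le_norm⟩ z

theorem apply_const (c : ℝ) : μ.toLinearMap (const G c) = c := by
  have hconst : const G c = c • (1 : G →ᵇ ℝ) := by ext; simp
  rw [hconst, map_smul, apply_one, smul_eq_mul, mul_one]

/-- The weak-* average `e ↦ μ (y ↦ A y e)` of a bounded continuous family of functionals. -/
noncomputable def dualMean : (G →ᵇ StrongDual ℝ E) →ₗ[ℝ] StrongDual ℝ E where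
  toFun A := LinearMap.mkContinuous
    { toFun e := μ.toLinearMap ((ContinuousLinearMap.apply ℝ ℝ e).compLeftContinuousBounded G A)
      map_add' e e' := by rw [← map_add]; congr 1; ext; simp
      map_smul' c e := by rw [RingHom.id_apply, ← map_smul]; congr 1; ext; simp }
    ‖A‖ fun e => (μ.abs_le_norm _).trans (norm_compLeftContinuousBounded_apply_le A e)
  map_add' A B := by ext e; simp
  map_smul' c A := by ext e; simp

theorem dualMean_apply (A : G →ᵇ StrongDual ℝ E) (e : E) :
    μ.dualMean A e =
      μ.toLinearMap ((ContinuousLinearMap.apply ℝ ℝ e).compLeftContinuousBounded G A) := rfl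

theorem dualMean_const (φ : StrongDual ℝ E) : μ.dualMean (const G φ) = φ := by
  ext e
  rw [dualMean_apply, ← μ.apply_const (φ e)]
  rfl

theorem norm_dualMean_le (A : G →ᵇ StrongDual ℝ E) : ‖μ.dualMean A‖ ≤ ‖A‖ :=
  LinearMap.mkContinuous_norm_le _ (norm_nonneg A) fun e =>
    (μ.abs_le_norm _).trans (norm_compLeftContinuousBounded_apply_le A e)

theorem dualMean_compContinuous_mulRight (A : G →ᵇ StrongDual ℝ E) (z : G) :
    μ.dualMean (A.compContinuous (ContinuousMap.mulRight z)) = μ.dualMean A := by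
  ext e
  exact μ.map_compContinuous_mulRight
    ((ContinuousLinearMap.apply ℝ ℝ e).compLeftContinuousBounded G A) z

theorem norm_dualMean_sub_le [Nonempty G] (A : G →ᵇ StrongDual ℝ E) (φ : StrongDual ℝ E) {C : ℝ}
    (hC : ∀ y, ‖A y - φ‖ ≤ C) : ‖μ.dualMean A - φ‖ ≤ C := by
  rw [← μ.dualMean_const φ, ← map_sub]
  exact (μ.norm_dualMean_le _).trans (norm_le_of_nonempty.2 hC)

end RightInvariantMean

namespace HyersUlam

theorem norm_mul_inv_add_sub_le {G V : Type*} [Group G] [SeminormedAddCommGroup V] {u h : G → V}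
    {δ : ℝ} (huh : ∀ g y, ‖u (g * y) - u g - h y‖ ≤ δ) (g y : G) :
    ‖u (g * y⁻¹) + h y - u g‖ ≤ δ := by
  have : u (g * y⁻¹) + h y - u g = -(u (g * y⁻¹ * y) - u (g * y⁻¹) - h y) := by
    rw [inv_mul_cancel_right]
    abel
  rw [this, norm_neg]
  exact huh _ _

variable {G E : Type*} [Group G] [TopologicalSpace G] [IsTopologicalGroup G]
  [NormedAddCommGroup E] [NormedSpace ℝ E] (μ : RightInvariantMean G)
  {u h : G → StrongDual ℝ E} {δ : ℝ} (hu : Continuous u) (hh : Continuous h)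
  (huh : ∀ g y, ‖u (g * y) - u g - h y‖ ≤ δ)

noncomputable def rightDiff (z : G) : G →ᵇ StrongDual ℝ E :=
  ofNormSubLe (fun y => u (y * z) - u y) (by fun_prop) (h z) δ fun y => huh y z

noncomputable def additivePart (z : G) : StrongDual ℝ E :=
  μ.dualMean (rightDiff hu huh z)

noncomputable def solIntegrand (g : G) : G →ᵇ StrongDual ℝ E :=
  ofNormSubLe (fun y => u (g * y⁻¹) + h y) (by fun_prop) (u g) δ (norm_mul_inv_add_sub_le huh g)

noncomputable def solution (g : G) : StrongDual ℝ E :=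
  μ.dualMean (solIntegrand hu hh huh g)

noncomputable def defect : G →ᵇ StrongDual ℝ E :=
  ofNormSubLe (fun y => h y - u y) (by fun_prop) (-u 1) δ fun y => by
    have : h y - u y - -u 1 = -(u (1 * y) - u 1 - h y) := by
      rw [one_mul]
      abel
    rw [this, norm_neg]
    exact huh _ _

theorem norm_additivePart_sub_le (z : G) : ‖additivePart μ hu huh z - h z‖ ≤ δ :=
  μ.norm_dualMean_sub_le _ _ fun y => huh y z

theorem norm_solution_sub_le (g : G) : ‖solution μ hu hh huh g - u g‖ ≤ δ :=
  μ.norm_dualMean_sub_le _ _ (norm_mul_inv_add_sub_le huh g)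

theorem additivePart_mul (y z : G) :
    additivePart μ hu huh (y * z) = additivePart μ hu huh y + additivePart μ hu huh z := by
  have hsplit : rightDiff hu huh (y * z) =
      (rightDiff hu huh z).compContinuous (ContinuousMap.mulRight y) + rightDiff hu huh y := by
    ext w
    simp [rightDiff, ofNormSubLe, mul_assoc]
  rw [additivePart, hsplit, map_add, μ.dualMean_compContinuous_mulRight, add_comm]
  rfl

theorem solution_mul (g z : G) :
    solution μ hu hh huh (g * z) = solution μ hu hh huh g + additivePart μ hu huh z := by
  -- The translate of `solIntegrand (g z)` by `z` is `y ↦ u (g y⁻¹) + h (y z)`; adding the bounded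
  -- defect `h - u` and its translate (which have the same mean) trades `h (y z) - h y` for
  -- `u (y z) - u y`.
  have hsplit : (solIntegrand hu hh huh (g * z)).compContinuous (ContinuousMap.mulRight z) +
      defect hu hh huh = solIntegrand hu hh huh g + rightDiff hu huh z +
        (defect hu hh huh).compContinuous (ContinuousMap.mulRight z) := by
    ext w
    simp [solIntegrand, rightDiff, defect, ofNormSubLe, mul_assoc]
    abel
  have hmean := congrArg μ.dualMean hsplit
  rwa [map_add, map_add, map_add, μ.dualMean_compContinuous_mulRight,
    μ.dualMean_compContinuous_mulRight, add_left_inj] at hmean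

theorem continuous_additivePart (hh : ContinuousAt h 1) : Continuous (additivePart μ hu huh) :=
  continuous_of_map_mul_of_norm_sub_le (additivePart_mul μ hu huh) hh
    (norm_additivePart_sub_le μ hu huh)

theorem continuous_solution : Continuous (solution μ hu hh huh) := by
  have hshift : solution μ hu hh huh = fun g => solution μ hu hh huh 1 + additivePart μ hu huh g :=
    funext fun g => by rw [← solution_mul, one_mul]
  rw [hshift]
  exact continuous_const.add (continuous_additivePart μ hu huh hh.continuousAt)

theorem solution_congr {a b : G} (hab : ∀ y, u (a * y) = u (b * y)) :
    solution μ hu hh huh a = solution μ hu hh huh b := by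
  have hfun : solIntegrand hu hh huh a = solIntegrand hu hh huh b := by
    ext1 y
    simp [solIntegrand, ofNormSubLe, hab]
  rw [solution, solution, hfun]

end HyersUlam

theorem QuotientGroup.rightRel_mul_right {G : Type*} [Group G] {L : Subgroup G} {a b : G}
    (hab : QuotientGroup.rightRel L a b) (y : G) : QuotientGroup.rightRel L (a * y) (b * y) := by
  rw [QuotientGroup.rightRel_apply] at hab ⊢
  simpa [mul_assoc] using hab

theorem stmt_10_general {G E : Type*} [Group G] [TopologicalSpace G] [IsTopologicalGroup G]
    [NormedAddCommGroup E] [NormedSpace ℝ E]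
    (L : Subgroup G)
    -- strong amenability of `G`: a right invariant mean on `CB(G)`
    (hamen : ∃ m : (G → ℝ) →ₗ[ℝ] ℝ, m 1 = 1 ∧
      (∀ (g : G → ℝ) (C : ℝ), Continuous g → (∀ y, |g y| ≤ C) → |m g| ≤ C) ∧
      (∀ (g : G → ℝ), Continuous g → (∃ C, ∀ y, |g y| ≤ C) →
        ∀ z : G, m (fun y => g (y * z)) = m g))
    (δ : ℝ)
    (h : G → StrongDual ℝ E) (hh_cont : Continuous h)
    (f : Quotient (QuotientGroup.rightRel L) → StrongDual ℝ E) (hf_cont : Continuous f)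
    (hfh : ∀ g y : G,
      ‖f (Quotient.mk (QuotientGroup.rightRel L) (g * y))
        - f (Quotient.mk (QuotientGroup.rightRel L) g) - h y‖ ≤ δ) :
    ∃ (H : G → StrongDual ℝ E)
      (F : Quotient (QuotientGroup.rightRel L) → StrongDual ℝ E),
      Continuous H ∧ Continuous F ∧
      (∀ y z : G, H (y * z) = H y + H z) ∧
      (∀ g y : G,
        F (Quotient.mk (QuotientGroup.rightRel L) (g * y))
          = F (Quotient.mk (QuotientGroup.rightRel L) g) + H y) ∧
      (∀ y : G, ‖H y - h y‖ ≤ δ) ∧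
      (∀ x : Quotient (QuotientGroup.rightRel L), ‖F x - f x‖ ≤ 2 * δ) := by
  obtain ⟨m, hm1, hmb, hminv⟩ := hamen
  let μ := RightInvariantMean.ofLinearMap m hm1 hmb hminv
  have hu : Continuous fun g => f (Quotient.mk (QuotientGroup.rightRel L) g) :=
    hf_cont.comp continuous_quot_mk
  have hδ : 0 ≤ δ := (norm_nonneg _).trans (hfh 1 1)
  open HyersUlam in
  let F : Quotient (QuotientGroup.rightRel L) → StrongDual ℝ E :=
    Quotient.lift (solution μ hu hh_cont hfh) fun a b hab =>
      solution_congr μ hu hh_cont hfh fun y =>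
        congrArg f (Quotient.sound (QuotientGroup.rightRel_mul_right hab y))
  open HyersUlam in
  refine ⟨additivePart μ hu hfh, F, continuous_additivePart μ hu hfh hh_cont.continuousAt,
    (continuous_solution μ hu hh_cont hfh).quotient_lift _, additivePart_mul μ hu hfh,
    fun g y => solution_mul μ hu hh_cont hfh g y, norm_additivePart_sub_le μ hu hfh, ?_⟩
  rintro ⟨g⟩
  exact (norm_solution_sub_le μ hu hh_cont hfh g).trans (by linarith)

/-- Theorem 4.2: Hyers–Ulam stability of the additive equation for continuous functions on a
homogeneous space `X = G/L` (right cosets) of a strongly amenable topological group `G`,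
provided the canonical projection `G → G/L` is a fiber bundle (equivalently, admits local
cross sections around every point). -/
theorem stmt_10 {G E : Type*} [Group G] [TopologicalSpace G] [IsTopologicalGroup G]
    [NormedAddCommGroup E] [NormedSpace ℝ E] [CompleteSpace E]
    (L : Subgroup G) (hL : IsClosed (L : Set G))
    -- the projection `G → G/L` is a fiber bundle: local cross sections around every point
    (hsec : ∀ p : Quotient (QuotientGroup.rightRel L),
      ∃ U : Set (Quotient (QuotientGroup.rightRel L)), IsOpen U ∧ p ∈ U ∧
        ∃ s : Quotient (QuotientGroup.rightRel L) → G, ContinuousOn s U ∧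
          ∀ q ∈ U, Quotient.mk (QuotientGroup.rightRel L) (s q) = q)
    -- strong amenability of `G`: a right invariant mean on `CB(G)`
    (hamen : ∃ m : (G → ℝ) →ₗ[ℝ] ℝ, m 1 = 1 ∧
      (∀ (g : G → ℝ) (C : ℝ), Continuous g → (∀ y, |g y| ≤ C) → |m g| ≤ C) ∧
      (∀ (g : G → ℝ), Continuous g → (∃ C, ∀ y, |g y| ≤ C) →
        ∀ z : G, m (fun y => g (y * z)) = m g))
    (δ : ℝ) (hδ : 0 < δ)
    (h : G → StrongDual ℝ E) (hh_cont : Continuous h)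
    (f : Quotient (QuotientGroup.rightRel L) → StrongDual ℝ E) (hf_cont : Continuous f)
    (hfh : ∀ g y : G,
      ‖f (Quotient.mk (QuotientGroup.rightRel L) (g * y))
        - f (Quotient.mk (QuotientGroup.rightRel L) g) - h y‖ ≤ δ) :
    ∃ (H : G → StrongDual ℝ E)
      (F : Quotient (QuotientGroup.rightRel L) → StrongDual ℝ E),
      Continuous H ∧ Continuous F ∧
      (∀ y z : G, H (y * z) = H y + H z) ∧
      (∀ g y : G,
        F (Quotient.mk (QuotientGroup.rightRel L) (g * y))
          = F (Quotient.mk (QuotientGroup.rightRel L) g) + H y) ∧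
      (∀ y : G, ‖H y - h y‖ ≤ δ) ∧
      (∀ x : Quotient (QuotientGroup.rightRel L), ‖F x - f x‖ ≤ 2 * δ) :=
  stmt_10_general L hamen δ h hh_cont f hf_cont hfh
end
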